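/- arXiv:2512.19550 — 2 statements merged into one kernel-verified Lean document; each statement's English description precedes it below -/
import Mathlib

section
/- Let y ∈ {1,...,K}, P a positive probability distribution on {1,...,K}, ỹ ∼ P, d = 𝟙[ỹ < y], and for i ∈ {1,...,K} let z̃ᵢ = (2d−1)𝟙[i = ỹ]/P(i). Fix real numbers s and θᵢ and define τ̃ᵢ = z̃ᵢ·𝟙[z̃ᵢ(s − θᵢ) ≤ 0] (where the indicator is evaluated on the random value of z̃ᵢ). Then E[τ̃ᵢ] = zᵢ·𝟙[zᵢ(s − θᵢ) ≤ 0] where zᵢ = 𝟙[i < y] − 𝟙[i ≥ y]. -/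
open Finset

/-- Positive homogeneity of `x ↦ x · 𝟙[x t ≤ 0]`: a positive factor does not change the sign
test. -/
lemma mul_div_mul_ite_nonpos {𝕜 : Type*} [Field 𝕜] [LinearOrder 𝕜] [IsStrictOrderedRing 𝕜]
    {c : 𝕜} (hc : 0 < c) (x t : 𝕜) :
    c * (x / c * (if x / c * t ≤ 0 then 1 else 0)) = x * (if x * t ≤ 0 then 1 else 0) := by
  have hsign : x / c * t ≤ 0 ↔ x * t ≤ 0 := by
    rw [div_mul_eq_mul_div, div_le_iff₀ hc, zero_mul]
  rw [if_congr hsign rfl rfl, ← mul_assoc, mul_div_cancel₀ x hc.ne']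

theorem stmt_7_general (K y : ℕ)
    (P : ℕ → ℝ) (hPpos : ∀ i ∈ Finset.Icc 1 K, 0 < P i)
    (s : ℝ) (θ : ℕ → ℝ)
    (zt : ℕ → ℕ → ℝ)
    (hzt : ∀ i j, zt i j =
      (2 * (if j < y then (1 : ℝ) else 0) - 1) * (if i = j then (1 : ℝ) else 0) / P i)
    (z : ℕ → ℝ)
    (hz : ∀ i, z i = (if i < y then (1 : ℝ) else 0) - (if y ≤ i then (1 : ℝ) else 0)) :
    ∀ i ∈ Finset.Icc 1 K,
      ∑ j ∈ Finset.Icc 1 K,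
        P j * (zt i j * (if zt i j * (s - θ i) ≤ 0 then (1 : ℝ) else 0))
      = z i * (if z i * (s - θ i) ≤ 0 then (1 : ℝ) else 0) := by
  intro i hi
  have hzt_off : ∀ j, j ≠ i → zt i j = 0 := fun j hj => by simp [hzt, Ne.symm hj]
  have hzt_diag : zt i i = z i / P i := by
    by_cases h : i < y
    · simp only [hzt, hz, h, not_le.mpr h]; norm_num
    · simp [hzt, hz, h, not_lt.mp h]
  rw [sum_eq_single_of_mem i hi fun j _ hj => by simp [hzt_off j hj], hzt_diag]
  exact mul_div_mul_ite_nonpos (hPpos i hi) (z i) (s - θ i)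

theorem stmt_7 (K y : ℕ) (hK : 1 ≤ K) (hy1 : 1 ≤ y) (hy2 : y ≤ K)
    (P : ℕ → ℝ) (hPpos : ∀ i ∈ Finset.Icc 1 K, 0 < P i)
    (hPsum : ∑ i ∈ Finset.Icc 1 K, P i = 1)
    (s : ℝ) (θ : ℕ → ℝ)
    (zt : ℕ → ℕ → ℝ)
    (hzt : ∀ i j, zt i j =
      (2 * (if j < y then (1 : ℝ) else 0) - 1) * (if i = j then (1 : ℝ) else 0) / P i)
    (z : ℕ → ℝ)
    (hz : ∀ i, z i = (if i < y then (1 : ℝ) else 0) - (if y ≤ i then (1 : ℝ) else 0)) :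
    ∀ i ∈ Finset.Icc 1 K,
      ∑ j ∈ Finset.Icc 1 K,
        P j * (zt i j * (if zt i j * (s - θ i) ≤ 0 then (1 : ℝ) else 0))
      = z i * (if z i * (s - θ i) ≤ 0 then (1 : ℝ) else 0) :=
  stmt_7_general K y P hPpos s θ zt hzt z hz
end

section
/- Let P = (1−γ)P₁ + γP₂ be the mixture distribution on {1,...,K} where P₁(i) = 𝟙[i = ŷ], P₂(i) = (1 + d_max − |i−ŷ|)/Z with d_max = max(ŷ, K−ŷ), Z the normalizer, and 0 < γ ≤ 1. Then ∑_{k=1}^K 1/P(k) ≤ (2K²/γ)(1 + ln K). -/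
open Finset

/-!
Write `w k = 1 + d_max - |k - ŷ|`. Then `w ≥ 1` on `[1, K]`, `Z = ∑ w` and `P k ≥ γ w k / Z`, so
`∑ 1 / P ≤ (Z / γ) ∑ 1 / w`. The tent `w` grows at least like `k` left of `ŷ` and like `K + 1 - k`
right of it, so `∑ 1 / w ≤ H_ŷ + H_{K-ŷ}`, while `Z ≤ K (1 + d_max)`. If both sides of `ŷ` are
nonempty then `1 + d_max ≤ K` and `H_ŷ + H_{K-ŷ} ≤ 2 H_K`; otherwise one harmonic number vanishes
and `1 + d_max ≤ 2K`. Either way `Z ∑ 1 / w ≤ 2 K² H_K ≤ 2 K² (1 + log K)`.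
-/

lemma harmonic_mono : Monotone harmonic :=
  monotone_nat_of_le_succ fun n => by
    rw [harmonic_succ]
    exact le_add_of_nonneg_right (by positivity)

lemma sum_Icc_one_div_le_harmonic {f : ℕ → ℝ} {n : ℕ} (hf : ∀ k ∈ Icc 1 n, (k : ℝ) ≤ f k) :
    ∑ k ∈ Icc 1 n, 1 / f k ≤ harmonic n := by
  rw [harmonic_eq_sum_Icc]
  push_cast
  refine sum_le_sum fun k hk => ?_
  have hk_pos : (0 : ℝ) < k := by exact_mod_cast (mem_Icc.1 hk).1
  rw [one_div]
  exact inv_anti₀ hk_pos (hf k hk)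

lemma sum_Icc_one_div_le_harmonic_sub {f : ℕ → ℝ} {m n : ℕ}
    (hf : ∀ k ∈ Icc (m + 1) n, (n + 1 - k : ℝ) ≤ f k) :
    ∑ k ∈ Icc (m + 1) n, 1 / f k ≤ harmonic (n - m) := by
  have hreflect : ∑ k ∈ Icc (m + 1) n, 1 / f k = ∑ j ∈ Icc 1 (n - m), 1 / f (n + 1 - j) := by
    refine sum_nbij' (fun k => n + 1 - k) (fun j => n + 1 - j) ?_ ?_ ?_ ?_ ?_ <;>
      intro k hk <;> rw [mem_Icc] at hk
    all_goals first | (rw [mem_Icc]; omega) | omega | rw [show n + 1 - (n + 1 - k) = k by omega]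
  rw [hreflect]
  refine sum_Icc_one_div_le_harmonic fun j hj => ?_
  rw [mem_Icc] at hj
  have hcast : ((n + 1 - j : ℕ) : ℝ) = n + 1 - j := by
    rw [Nat.cast_sub (by omega)]
    push_cast
    ring
  have := hf (n + 1 - j) (mem_Icc.2 (by omega))
  rw [hcast] at this
  linarith

lemma succ_mul_harmonic_le (n : ℕ) : (1 + n : ℝ) * harmonic n ≤ 2 * n * harmonic n := by
  rcases Nat.eq_zero_or_pos n with rfl | hn
  · simp
  · have : (1 : ℝ) ≤ n := by exact_mod_cast hn
    nlinarith [(Rat.cast_pos (K := ℝ)).2 (harmonic_pos hn.ne')]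

lemma succ_max_mul_harmonic_add_le {y K : ℕ} (hy : y ≤ K) :
    (1 + max (y : ℝ) (K - y)) * (harmonic y + harmonic (K - y) : ℝ) ≤ 2 * K * harmonic K := by
  obtain ⟨b, rfl⟩ := Nat.exists_eq_add_of_le hy
  rw [Nat.add_sub_cancel_left, Nat.cast_add, add_sub_cancel_left]
  rcases Nat.eq_zero_or_pos y with rfl | hy0
  · simpa using succ_mul_harmonic_le b
  rcases Nat.eq_zero_or_pos b with rfl | hb
  · simpa using succ_mul_harmonic_le y
  have hmax : 1 + max (y : ℝ) b ≤ y + b := by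
    rw [← Nat.cast_max]; exact_mod_cast (by omega : 1 + max y b ≤ y + b)
  have hHy : (harmonic y : ℝ) ≤ harmonic (y + b) := by exact_mod_cast harmonic_mono (by omega)
  have hHb : (harmonic b : ℝ) ≤ harmonic (y + b) := by exact_mod_cast harmonic_mono (by omega)
  have := (Rat.cast_pos (K := ℝ)).2 (harmonic_pos hy0.ne')
  have := (Rat.cast_pos (K := ℝ)).2 (harmonic_pos hb.ne')
  calc (1 + max (y : ℝ) b) * (harmonic y + harmonic b : ℝ)
      ≤ (y + b) * (2 * harmonic (y + b)) := by gcongr; linarith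
    _ = 2 * (y + b) * harmonic (y + b) := by ring

section Tent

variable {K y : ℕ} {d : ℝ}

lemma tent_pos (hd₁ : (y : ℝ) ≤ d) (hd₂ : (K : ℝ) - y ≤ d) {k : ℕ} (hk : k ≤ K) :
    0 < 1 + d - |(k : ℝ) - y| := by
  have : (k : ℝ) ≤ K := by exact_mod_cast hk
  have : |(k : ℝ) - y| ≤ d := abs_sub_le_iff.2 ⟨by linarith, by linarith [k.cast_nonneg (α := ℝ)]⟩
  linarith

lemma sum_Icc_tent (K y : ℕ) (d : ℝ) :
    ∑ k ∈ Icc 1 K, (1 + d - |(k : ℝ) - y|) = K + K * d - ∑ k ∈ Icc 1 K, |(k : ℝ) - y| := by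
  simp only [sum_sub_distrib, sum_const, Nat.card_Icc, Nat.add_sub_cancel, nsmul_eq_mul]
  ring

lemma sum_Icc_one_div_tent_le (hy : y ≤ K) (hd₁ : (y : ℝ) ≤ d) (hd₂ : (K : ℝ) - y ≤ d) :
    ∑ k ∈ Icc 1 K, 1 / (1 + d - |(k : ℝ) - y|) ≤ harmonic y + harmonic (K - y) := by
  have hsplit := (sum_Ioc_consecutive (fun k : ℕ => 1 / (1 + d - |(k : ℝ) - y|))
    (Nat.zero_le y) hy).symm
  simp only [← Icc_add_one_left_eq_Ioc, zero_add] at hsplit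
  rw [hsplit]
  gcongr
  · refine sum_Icc_one_div_le_harmonic fun k hk => ?_
    have : (k : ℝ) ≤ y := by exact_mod_cast (mem_Icc.1 hk).2
    rw [abs_of_nonpos (by linarith)]
    linarith
  · refine sum_Icc_one_div_le_harmonic_sub fun k hk => ?_
    have : (y : ℝ) + 1 ≤ k := by exact_mod_cast (mem_Icc.1 hk).1
    rw [abs_of_nonneg (by linarith)]
    linarith

end Tent

lemma sum_one_div_le_inv_mul_sum {ι : Type*} {s : Finset ι} {w P : ι → ℝ} {c : ℝ} (hc : 0 < c)
    (hw : ∀ i ∈ s, 0 < w i) (hP : ∀ i ∈ s, c * w i ≤ P i) :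
    ∑ i ∈ s, 1 / P i ≤ c⁻¹ * ∑ i ∈ s, 1 / w i := by
  rw [mul_sum]
  refine sum_le_sum fun i hi => ?_
  calc 1 / P i ≤ 1 / (c * w i) := one_div_le_one_div_of_le (mul_pos hc (hw i hi)) (hP i hi)
    _ = c⁻¹ * (1 / w i) := by rw [one_div, mul_inv, one_div]

theorem stmt_10_general (K yh : ℕ) (hK : 1 ≤ K) (h2 : yh ≤ K)
    (γ : ℝ) (hγ0 : 0 < γ) (hγ1 : γ ≤ 1)
    (dmax Z : ℝ)
    (hd : dmax = max (yh : ℝ) ((K : ℝ) - yh))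
    (hZ : Z = (K : ℝ) + (K : ℝ) * dmax - ∑ i ∈ Finset.Icc 1 K, |(i : ℝ) - (yh : ℝ)|)
    (P : ℕ → ℝ)
    (hP : ∀ k, P k = (1 - γ) * (if k = yh then (1 : ℝ) else 0)
                      + γ * (1 + dmax - |(k : ℝ) - (yh : ℝ)|) / Z) :
    ∑ k ∈ Finset.Icc 1 K, 1 / P k ≤ (2 * (K : ℝ) ^ 2 / γ) * (1 + Real.log K) := by
  set w : ℕ → ℝ := fun k => 1 + dmax - |(k : ℝ) - yh|
  have hd₁ : (yh : ℝ) ≤ dmax := hd ▸ le_max_left _ _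
  have hd₂ : (K : ℝ) - yh ≤ dmax := hd ▸ le_max_right _ _
  have hw_pos : ∀ k ∈ Icc 1 K, 0 < w k := fun k hk =>
    tent_pos hd₁ hd₂ (mem_Icc.1 hk).2
  have hZ_le : Z ≤ K * (1 + dmax) := by
    rw [hZ, mul_one_add]
    linarith [sum_nonneg fun i (_ : i ∈ Icc 1 K) => abs_nonneg ((i : ℝ) - yh)]
  have hZ_pos : 0 < Z := by
    rw [hZ, ← sum_Icc_tent]
    exact sum_pos hw_pos (nonempty_Icc.2 hK)
  have hP_ge : ∀ k ∈ Icc 1 K, γ / Z * w k ≤ P k := fun k _ => by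
    have : 0 ≤ (1 - γ) * (if k = yh then (1 : ℝ) else 0) :=
      mul_nonneg (by linarith) (by split_ifs <;> norm_num)
    rw [hP k, div_mul_eq_mul_div]
    linarith
  have hmix : ∑ k ∈ Icc 1 K, 1 / P k ≤ Z / γ * ∑ k ∈ Icc 1 K, 1 / w k := by
    simpa only [inv_div] using sum_one_div_le_inv_mul_sum (div_pos hγ0 hZ_pos) hw_pos hP_ge
  have hw_sum_nonneg : 0 ≤ ∑ k ∈ Icc 1 K, 1 / w k :=
    sum_nonneg fun k hk => (one_div_pos.2 (hw_pos k hk)).le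
  have hd_nonneg : 0 ≤ 1 + dmax := by linarith [yh.cast_nonneg (α := ℝ)]
  calc ∑ k ∈ Icc 1 K, 1 / P k ≤ Z / γ * ∑ k ∈ Icc 1 K, 1 / w k := hmix
    _ ≤ K * (1 + dmax) / γ * (harmonic yh + harmonic (K - yh) : ℝ) := by
      gcongr
      exact sum_Icc_one_div_tent_le h2 hd₁ hd₂
    _ = K * ((1 + dmax) * (harmonic yh + harmonic (K - yh) : ℝ)) / γ := by ring
    _ ≤ K * (2 * K * harmonic K) / γ := by
      rw [hd]; gcongr K * ?_ / γ; exact succ_max_mul_harmonic_add_le h2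
    _ = 2 * K ^ 2 / γ * harmonic K := by ring
    _ ≤ 2 * K ^ 2 / γ * (1 + Real.log K) := by gcongr; exact harmonic_le_one_add_log K

theorem stmt_10 (K yh : ℕ) (hK : 1 ≤ K) (h1 : 1 ≤ yh) (h2 : yh ≤ K)
    (γ : ℝ) (hγ0 : 0 < γ) (hγ1 : γ ≤ 1)
    (dmax Z : ℝ)
    (hd : dmax = max (yh : ℝ) ((K : ℝ) - yh))
    (hZ : Z = (K : ℝ) + (K : ℝ) * dmax - ∑ i ∈ Finset.Icc 1 K, |(i : ℝ) - (yh : ℝ)|)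
    (P : ℕ → ℝ)
    (hP : ∀ k, P k = (1 - γ) * (if k = yh then (1 : ℝ) else 0)
                      + γ * (1 + dmax - |(k : ℝ) - (yh : ℝ)|) / Z) :
    ∑ k ∈ Finset.Icc 1 K, 1 / P k ≤ (2 * (K : ℝ) ^ 2 / γ) * (1 + Real.log K) :=
  stmt_10_general K yh hK h2 γ hγ0 hγ1 dmax Z hd hZ P hP
end
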